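/- Let ε > 0, γ > 0 and suppose the functions η_k : ℝ → ℝ (for integers k ≥ 1) satisfy: |η_k(λ)| ≤ C_N (2^k |1 - |λ|/R|)^{-N} for every N ∈ ℕ whenever |1 - |λ|/R| > 2^{-k}, and |η_k(λ)| ≤ C (2^{-k} + 2^k |1 - |λ|/R|)^{ε} whenever |1 - |λ|/R| ≤ 2^{-k}. Then there exists a constant C' (independent of λ and R) such that for all R > 1 and all λ > 0, ∑_{k=1}^∞ |η_k(λ)|² (1 + λ²)^{γ} ≤ C' R^{2γ}. -/
import Mathlib

open Real

private lemma aux_rpow_inv_pow (α : ℝ) (k : ℕ) :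
    (((2:ℝ)^k)⁻¹) ^ α = (((2:ℝ)^α)⁻¹)^k := by
  have h2 : (0:ℝ) ≤ 2 := by norm_num
  rw [← Real.rpow_natCast (2:ℝ) k, ← Real.rpow_neg h2, ← Real.rpow_neg h2,
    ← Real.rpow_natCast ((2:ℝ) ^ (-α)) k, ← Real.rpow_mul h2, ← Real.rpow_mul h2]
  ring_nf

private lemma aux_min_sum (α : ℝ) (hα : 0 < α) (t : ℝ) (ht : 0 ≤ t) :
    Summable (fun k : ℕ => min ((2:ℝ)^(k+1) * t) (((2:ℝ)^(k+1) * t)⁻¹) ^ α) ∧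
    ∑' k : ℕ, min ((2:ℝ)^(k+1) * t) (((2:ℝ)^(k+1) * t)⁻¹) ^ α
      ≤ 4 / (1 - ((2:ℝ)^α)⁻¹) := by
  set r : ℝ := ((2:ℝ)^α)⁻¹ with hr
  have h2α : (1:ℝ) < (2:ℝ)^α := Real.one_lt_rpow_iff_of_pos (by norm_num) |>.mpr (by norm_num; exact hα)
  have hr0 : 0 < r := by positivity
  have hr1 : r < 1 := by rw [hr]; exact inv_lt_one_of_one_lt₀ h2α
  have hrne : (0:ℝ) < 1 - r := by linarith
  set F : ℕ → ℝ := fun k => min ((2:ℝ)^(k+1) * t) (((2:ℝ)^(k+1) * t)⁻¹) ^ α with hF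
  have hFnonneg : ∀ k, 0 ≤ F k := fun k => Real.rpow_nonneg (le_min (by positivity) (by positivity)) _
  -- pointwise helper
  have hhelp : ∀ k m : ℕ, min ((2:ℝ)^(k+1) * t) (((2:ℝ)^(k+1) * t)⁻¹) ≤ ((2:ℝ)^m)⁻¹ → F k ≤ r ^ m := by
    intro k m h
    have := Real.rpow_le_rpow (le_min (by positivity) (by positivity)) h hα.le
    rw [aux_rpow_inv_pow α m] at this
    exact this
  rcases eq_or_lt_of_le ht with ht0 | htpos
  · have hz : ∀ k : ℕ, F k = 0 := by
      intro k
      simp [hF, ← ht0, Real.zero_rpow hα.ne']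
    constructor
    · exact (summable_congr fun k => (hz k)).mpr summable_zero
    · rw [tsum_congr hz, tsum_zero]
      positivity
  · -- t > 0
    obtain ⟨n₀, hn₀⟩ := pow_unbounded_of_one_lt (t⁻¹) (by norm_num : (1:ℝ) < 2)
    have hex : ∃ n : ℕ, (1:ℝ) ≤ 2^(n+1) * t := by
      refine ⟨n₀, ?_⟩
      have : t⁻¹ < 2^(n₀+1) := lt_of_lt_of_le hn₀ (by
        apply pow_le_pow_right₀ (by norm_num); omega)
      calc (1:ℝ) = t⁻¹ * t := by field_simp
        _ ≤ 2^(n₀+1) * t := by nlinarith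
    set K := Nat.find hex with hK
    have hK1 : (1:ℝ) ≤ 2^(K+1) * t := Nat.find_spec hex
    have hKmin : ∀ m < K, (2:ℝ)^(m+1) * t < 1 := by
      intro m hm
      have := Nat.find_min hex hm
      push_neg at this
      exact this
    -- far bound
    have hfar : ∀ j : ℕ, F (j + K) ≤ r ^ j := by
      intro j
      apply hhelp
      apply min_le_of_right_le
      rw [inv_le_inv₀ (by positivity) (by positivity)]
      calc ((2:ℝ)^j) = 2^j * 1 := by ring
        _ ≤ 2^j * (2^(K+1) * t) := by nlinarith [pow_pos (by norm_num : (0:ℝ) < 2) j]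
        _ = 2^(j + K + 1) * t := by rw [pow_add]; ring
    -- near bound
    have hnear : ∀ k < K, F k ≤ r ^ (K - 1 - k) := by
      intro k hk
      apply hhelp
      apply min_le_of_left_le
      have hK1' : 1 ≤ K := by omega
      have hKm : (2:ℝ)^(K - 1 + 1) * t < 1 := hKmin (K-1) (by omega)
      have hKK : (2:ℝ)^K * t < 1 := by
        have : K - 1 + 1 = K := by omega
        rwa [this] at hKm
      have hb : (0:ℝ) < 2^(k+1)*t := by positivity
      have hprod : (2:ℝ)^(K-1-k) * (2^(k+1)*t) ≤ 1 := by
        calc (2:ℝ)^(K-1-k) * (2^(k+1)*t) = 2^(K-1-k+(k+1)) * t := by rw [pow_add]; ring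
          _ = 2^K * t := by congr 2; omega
          _ ≤ 1 := hKK.le
      rw [← inv_inv ((2:ℝ)^(k+1) * t)]
      rw [inv_le_inv₀ (by positivity) (by positivity)]
      calc (2:ℝ)^(K-1-k) = 2^(K-1-k) * (2^(k+1)*t) * (2^(k+1)*t)⁻¹ := by
            field_simp
        _ ≤ 1 * (2^(k+1)*t)⁻¹ := mul_le_mul_of_nonneg_right hprod (by positivity)
        _ = (2^(k+1)*t)⁻¹ := one_mul _
    have hsum_shift : Summable fun j : ℕ => F (j + K) :=
      Summable.of_nonneg_of_le (fun j => hFnonneg _) hfar (summable_geometric_of_lt_one hr0.le hr1)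
    have hsumF : Summable F := (summable_nat_add_iff K).mp hsum_shift
    refine ⟨hsumF, ?_⟩
    have hsplit := Summable.sum_add_tsum_nat_add K hsumF
    rw [← hsplit]
    have h1 : ∑ i ∈ Finset.range K, F i ≤ (1 - r)⁻¹ := by
      calc ∑ i ∈ Finset.range K, F i ≤ ∑ i ∈ Finset.range K, r ^ (K - 1 - i) := by
            apply Finset.sum_le_sum
            intro i hi
            exact hnear i (Finset.mem_range.mp hi)
        _ = ∑ i ∈ Finset.range K, r ^ i := by
            rw [← Finset.sum_range_reflect (fun i => r ^ i) K]
        _ ≤ ∑' i : ℕ, r ^ i := Summable.sum_le_tsum _ (fun i _ => by positivity)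
              (summable_geometric_of_lt_one hr0.le hr1)
        _ = (1 - r)⁻¹ := tsum_geometric_of_lt_one hr0.le hr1
    have h2 : ∑' j : ℕ, F (j + K) ≤ (1 - r)⁻¹ := by
      calc ∑' j : ℕ, F (j + K) ≤ ∑' j : ℕ, r ^ j :=
            Summable.tsum_le_tsum hfar hsum_shift (summable_geometric_of_lt_one hr0.le hr1)
        _ = (1 - r)⁻¹ := tsum_geometric_of_lt_one hr0.le hr1
    have : (1 - r)⁻¹ + (1 - r)⁻¹ ≤ 4 / (1 - r) := by
      rw [div_eq_mul_inv]
      have : (0:ℝ) ≤ (1-r)⁻¹ := by positivity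
      nlinarith
    linarith

set_option maxHeartbeats 1000000 in
/-- inequality (2.10), Lemma 2.4: if the functions `η_k` (depending on `R`)
satisfy rapid decay away from `|1-|λ|/R| ≤ 2^{-k}` and a mild bound there, then
`∑_{k ≥ 1} |η_k(λ)|² (1+λ²)^γ ≤ C' R^{2γ}` for all `R > 1`, `λ > 0`. -/
theorem stmt_3 (ε γ : ℝ) (hε : 0 < ε) (hγ : 0 < γ)
    (η : ℕ → ℝ → ℝ → ℝ)  -- η k R λ
    (hdecay : ∀ N : ℕ, ∃ C > (0 : ℝ), ∀ k : ℕ, 1 ≤ k → ∀ R > (1 : ℝ), ∀ l : ℝ,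
      |1 - |l| / R| > (2 : ℝ) ^ (-(k : ℤ)) →
        |η k R l| ≤ C * ((2 : ℝ) ^ k * |1 - |l| / R|) ^ (-(N : ℝ)))
    (hnear : ∃ C > (0 : ℝ), ∀ k : ℕ, 1 ≤ k → ∀ R > (1 : ℝ), ∀ l : ℝ,
      |1 - |l| / R| ≤ (2 : ℝ) ^ (-(k : ℤ)) →
        |η k R l| ≤ C * ((2 : ℝ) ^ (-(k : ℤ)) + (2 : ℝ) ^ k * |1 - |l| / R|) ^ ε) :
    ∃ C' > (0 : ℝ), ∀ R > (1 : ℝ), ∀ l : ℝ, 0 < l →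
      (∑' k : ℕ, |η (k + 1) R l| ^ 2 * (1 + l ^ 2) ^ γ) ≤ C' * R ^ (2 * γ) := by
  obtain ⟨C, hC0, hnearb⟩ := hnear
  set N : ℕ := ⌈γ⌉₊ + 1 with hNdef
  have hγN : γ ≤ (N : ℝ) := by
    have := Nat.le_ceil γ
    have h2 : ((⌈γ⌉₊ : ℝ)) ≤ (N : ℝ) := by rw [hNdef]; push_cast; linarith
    linarith
  have hN1 : 1 ≤ N := by omega
  have hN1' : (1:ℝ) ≤ (N:ℝ) := by exact_mod_cast hN1
  obtain ⟨D, hD0, hdecb⟩ := hdecay N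
  set α : ℝ := min (2*ε) 1 with hαdef
  have hα : 0 < α := lt_min (by linarith) one_pos
  have hα1 : α ≤ 1 := min_le_right _ _
  have hα2ε : α ≤ 2*ε := min_le_left _ _
  set r : ℝ := ((2:ℝ)^α)⁻¹ with hrdef
  have h2α : (1:ℝ) < (2:ℝ)^α := Real.one_lt_rpow_iff_of_pos (by norm_num) |>.mpr (by norm_num; exact hα)
  have hr0 : 0 < r := by positivity
  have hr1 : r < 1 := by rw [hrdef]; exact inv_lt_one_of_one_lt₀ h2α
  have hrne : (0:ℝ) < 1 - r := by linarith
  set A : ℝ := 2*C^2*(2:ℝ)^(2*ε)*(5:ℝ)^γ + D^2*(5:ℝ)^γ + D^2*(2:ℝ)^γ*(2:ℝ)^(2*γ) with hAdef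
  have hA0 : 0 < A := by positivity
  refine ⟨A * 5 / (1 - r), by positivity, ?_⟩
  intro R hR l hl
  have hR0 : (0:ℝ) < R := by linarith
  set t : ℝ := |1 - |l| / R| with htdef
  have ht : 0 ≤ t := abs_nonneg _
  have hRγ0 : (0:ℝ) ≤ R ^ (2*γ) := Real.rpow_nonneg hR0.le _
  -- helper: squared rpow
  have hsq : ∀ x : ℝ, 0 ≤ x → ∀ c : ℝ, (x ^ c) ^ (2:ℕ) = x ^ (c * 2) := by
    intro x hx c
    rw [← Real.rpow_natCast (x ^ c) 2, ← Real.rpow_mul hx]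
    norm_num
  -- helper: (1+l^2)^γ ≤ 5^γ R^(2γ) when l ≤ 2R
  have hR2γ : ((5:ℝ) * R^2) ^ γ = (5:ℝ)^γ * R^(2*γ) := by
    rw [Real.mul_rpow (by norm_num) (by positivity), ← Real.rpow_natCast R 2,
      ← Real.rpow_mul hR0.le]
    norm_num
  have h5 : l ≤ 2*R → (1 + l^2)^γ ≤ (5:ℝ)^γ * R^(2*γ) := by
    intro hl2
    have h1 : 1 + l^2 ≤ 5*R^2 := by
      have e1 : l^2 ≤ (2*R)^2 := pow_le_pow_left₀ hl.le hl2 2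
      have e2 : (1:ℝ) ≤ R^2 := one_le_pow₀ (by linarith)
      have e3 : (2*R)^2 = 4*R^2 := by ring
      linarith
    calc (1+l^2)^γ ≤ (5*R^2)^γ := Real.rpow_le_rpow (by positivity) h1 hγ.le
      _ = (5:ℝ)^γ * R^(2*γ) := hR2γ
  -- the key pointwise bound
  have key : ∀ k : ℕ, 1 ≤ k →
      |η k R l| ^ 2 * (1 + l ^ 2) ^ γ
        ≤ A * R ^ (2*γ) * (r ^ k + min ((2:ℝ)^k * t) (((2:ℝ)^k * t)⁻¹) ^ α) := by
    intro k hk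
    have h2k : (1:ℝ) ≤ (2:ℝ)^k := one_le_pow₀ (by norm_num)
    have h2k0 : (0:ℝ) < (2:ℝ)^k := by positivity
    have hzk : (2:ℝ)^(-(k:ℤ)) = ((2:ℝ)^k)⁻¹ := by rw [zpow_neg, zpow_natCast]
    set u : ℝ := (2:ℝ)^k * t with hudef
    have hu0 : 0 ≤ u := by positivity
    have hmin0 : 0 ≤ min u u⁻¹ := le_min hu0 (by positivity)
    have hX0 : 0 ≤ r^k + min u u⁻¹ ^ α := by positivity
    by_cases hc : t ≤ ((2:ℝ)^k)⁻¹
    · -- near case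
      have hb := hnearb k hk R hR l (by rw [hzk]; exact hc)
      rw [hzk] at hb
      have hcc0 : (0:ℝ) < ((2:ℝ)^k)⁻¹ := by positivity
      have hcc1 : ((2:ℝ)^k)⁻¹ ≤ 1 := by
        rw [inv_le_one_iff₀]; right; exact h2k
      have hu1 : u ≤ 1 := by
        rw [hudef]
        calc (2:ℝ)^k * t ≤ (2:ℝ)^k * ((2:ℝ)^k)⁻¹ :=
              mul_le_mul_of_nonneg_left hc (by positivity)
          _ = 1 := mul_inv_cancel₀ h2k0.ne'
      have hsplit : (((2:ℝ)^k)⁻¹ + u)^ε ≤ (2*((2:ℝ)^k)⁻¹)^ε + (2*u)^ε := by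
        rcases le_total (((2:ℝ)^k)⁻¹) u with h | h
        · calc (((2:ℝ)^k)⁻¹ + u)^ε ≤ (2*u)^ε :=
                Real.rpow_le_rpow (by positivity) (by linarith) hε.le
            _ ≤ _ := le_add_of_nonneg_left (Real.rpow_nonneg (by positivity) _)
        · calc (((2:ℝ)^k)⁻¹ + u)^ε ≤ (2*((2:ℝ)^k)⁻¹)^ε :=
                Real.rpow_le_rpow (by positivity) (by linarith) hε.le
            _ ≤ _ := le_add_of_nonneg_right (Real.rpow_nonneg (by positivity) _)
      have hb2 : |η k R l| ≤ C * ((2*((2:ℝ)^k)⁻¹)^ε + (2*u)^ε) :=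
        le_trans hb (mul_le_mul_of_nonneg_left hsplit hC0.le)
      have hbsq : |η k R l|^2 ≤ C^2 * (2*((2*((2:ℝ)^k)⁻¹)^ε)^2 + 2*((2*u)^ε)^2) := by
        have h1 := pow_le_pow_left₀ (abs_nonneg _) hb2 2
        have h3 : ((2*((2:ℝ)^k)⁻¹)^ε + (2*u)^ε)^2
            ≤ 2*((2*((2:ℝ)^k)⁻¹)^ε)^2 + 2*((2*u)^ε)^2 := by
          nlinarith [sq_nonneg ((2*((2:ℝ)^k)⁻¹)^ε - (2*u)^ε)]
        calc |η k R l|^2 ≤ (C * ((2*((2:ℝ)^k)⁻¹)^ε + (2*u)^ε))^2 := h1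
          _ = C^2 * ((2*((2:ℝ)^k)⁻¹)^ε + (2*u)^ε)^2 := by ring
          _ ≤ C^2 * (2*((2*((2:ℝ)^k)⁻¹)^ε)^2 + 2*((2*u)^ε)^2) :=
              mul_le_mul_of_nonneg_left h3 (by positivity)
      have e1 : ((2*((2:ℝ)^k)⁻¹)^ε)^(2:ℕ) = (2:ℝ)^(2*ε) * (((2:ℝ)^k)⁻¹)^(2*ε) := by
        rw [hsq _ (by positivity), Real.mul_rpow (by norm_num) (by positivity), mul_comm ε 2]
      have e2 : ((2*u)^ε)^(2:ℕ) = (2:ℝ)^(2*ε) * u^(2*ε) := by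
        rw [hsq _ (by positivity), Real.mul_rpow (by norm_num) hu0, mul_comm ε 2]
      have e3 : (((2:ℝ)^k)⁻¹)^(2*ε) ≤ r^k := by
        rw [← aux_rpow_inv_pow α k]
        exact Real.rpow_le_rpow_of_exponent_ge hcc0 hcc1 hα2ε
      have e4 : u^(2*ε) ≤ min u u⁻¹ ^ α := by
        rcases eq_or_lt_of_le hu0 with h0 | h0
        · rw [← h0, Real.zero_rpow (by positivity : (2*ε) ≠ 0)]
          positivity
        · have hmineq : min u u⁻¹ = u := min_eq_left (by
            have : 1 ≤ u⁻¹ := one_le_inv_iff₀.mpr ⟨h0, hu1⟩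
            linarith)
          rw [hmineq]
          exact Real.rpow_le_rpow_of_exponent_ge h0 hu1 hα2ε
      have hη2 : |η k R l|^2 ≤ 2*C^2*(2:ℝ)^(2*ε) * (r^k + min u u⁻¹ ^ α) := by
        calc |η k R l|^2 ≤ C^2 * (2*((2*((2:ℝ)^k)⁻¹)^ε)^2 + 2*((2*u)^ε)^2) := hbsq
          _ = 2*C^2*(2:ℝ)^(2*ε) * ((((2:ℝ)^k)⁻¹)^(2*ε) + u^(2*ε)) := by
              rw [e1, e2]; ring
          _ ≤ 2*C^2*(2:ℝ)^(2*ε) * (r^k + min u u⁻¹ ^ α) := by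
              apply mul_le_mul_of_nonneg_left (add_le_add e3 e4) (by positivity)
      have hl2R : l ≤ 2*R := by
        have hla : |l| = l := abs_of_pos hl
        have h12 : ((2:ℝ)^k)⁻¹ ≤ 1/2 := by
          rw [inv_le_comm₀ h2k0 (by norm_num)]
          calc (1/2 : ℝ)⁻¹ = 2^1 := by norm_num
            _ ≤ 2^k := pow_le_pow_right₀ (by norm_num) hk
        have := abs_le.mp (le_trans (le_of_eq htdef.symm) (le_trans hc h12))
        rw [hla] at this
        have h3 : l / R ≤ 3/2 := by linarith [this.1]
        rw [div_le_iff₀ hR0] at h3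
        linarith
      calc |η k R l|^2 * (1+l^2)^γ
          ≤ (2*C^2*(2:ℝ)^(2*ε) * (r^k + min u u⁻¹ ^ α)) * ((5:ℝ)^γ * R^(2*γ)) := by
            apply mul_le_mul hη2 (h5 hl2R) (Real.rpow_nonneg (by positivity) _) (by positivity)
        _ = (2*C^2*(2:ℝ)^(2*ε)*(5:ℝ)^γ) * (R^(2*γ) * (r^k + min u u⁻¹ ^ α)) := by ring
        _ ≤ A * (R^(2*γ) * (r^k + min u u⁻¹ ^ α)) := by
            apply mul_le_mul_of_nonneg_right _ (by positivity)
            rw [hAdef]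
            have h1 : (0:ℝ) ≤ D^2*(5:ℝ)^γ := by positivity
            have h2 : (0:ℝ) ≤ D^2*(2:ℝ)^γ*(2:ℝ)^(2*γ) := by positivity
            linarith
        _ = A * R^(2*γ) * (r^k + min u u⁻¹ ^ α) := by ring
    · -- far case
      push_neg at hc
      have hb := hdecb k hk R hR l (by rw [hzk]; exact hc)
      have hu1 : 1 < u := by
        rw [hudef]
        calc (1:ℝ) = (2:ℝ)^k * ((2:ℝ)^k)⁻¹ := (mul_inv_cancel₀ h2k0.ne').symm
          _ < (2:ℝ)^k * t := by
              exact (mul_lt_mul_iff_right₀ h2k0).mpr hc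
      set c : ℝ := 2*(N:ℝ) with hcdef
      have hαc : α ≤ c := by rw [hcdef]; linarith
      have hγc : 2*γ - c ≤ 0 := by rw [hcdef]; linarith
      have hησ : |η k R l|^2 ≤ D^2 * u^(-c) := by
        have h1 := pow_le_pow_left₀ (abs_nonneg _) hb 2
        have h2 : (D * u ^ (-(N:ℝ)))^(2:ℕ) = D^2 * u^(-c) := by
          rw [mul_pow, hsq u hu0, hcdef]
          ring_nf
        rw [h2] at h1
        exact h1
      have humul : u^(-c) = ((2:ℝ)^k)^(-c) * t^(-c) := by
        rw [hudef, Real.mul_rpow (by positivity) ht]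
      have h2kc : ((2:ℝ)^k)^(-c) ≤ r^k := by
        rw [← aux_rpow_inv_pow α k, Real.inv_rpow (by positivity), ← Real.rpow_neg (by positivity)]
        exact Real.rpow_le_rpow_of_exponent_le h2k (by linarith)
      by_cases hl2 : l ≤ 2*R
      · -- far, l ≤ 2R
        have hminr : min u u⁻¹ = u⁻¹ := min_eq_right (by
          have h1 : u⁻¹ ≤ 1 := inv_le_one_of_one_le₀ hu1.le
          linarith)
        have hum : u^(-c) ≤ min u u⁻¹ ^ α := by
          rw [hminr, Real.inv_rpow hu0, ← Real.rpow_neg hu0]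
          exact Real.rpow_le_rpow_of_exponent_le hu1.le (by linarith)
        calc |η k R l|^2 * (1+l^2)^γ
            ≤ (D^2 * (min u u⁻¹ ^ α)) * ((5:ℝ)^γ * R^(2*γ)) := by
              apply mul_le_mul _ (h5 hl2) (Real.rpow_nonneg (by positivity) _) (by positivity)
              calc |η k R l|^2 ≤ D^2 * u^(-c) := hησ
                _ ≤ D^2 * (min u u⁻¹ ^ α) := mul_le_mul_of_nonneg_left hum (by positivity)
          _ = (D^2*(5:ℝ)^γ) * (R^(2*γ) * (min u u⁻¹ ^ α)) := by ring
          _ ≤ A * (R^(2*γ) * (r^k + min u u⁻¹ ^ α)) := by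
              apply mul_le_mul
              · rw [hAdef]
                have h1 : (0:ℝ) ≤ 2*C^2*(2:ℝ)^(2*ε)*(5:ℝ)^γ := by positivity
                have h2 : (0:ℝ) ≤ D^2*(2:ℝ)^γ*(2:ℝ)^(2*γ) := by positivity
                linarith
              · apply mul_le_mul_of_nonneg_left _ hRγ0
                exact le_add_of_nonneg_left (by positivity)
              · positivity
              · exact hA0.le
          _ = A * R^(2*γ) * (r^k + min u u⁻¹ ^ α) := by ring
      · -- far, l > 2R
        push_neg at hl2
        have hla : |l| = l := abs_of_pos hl
        have htval : t = l/R - 1 := by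
          rw [htdef, hla, abs_of_neg]
          · ring
          · have : (2:ℝ) < l / R := by rw [lt_div_iff₀ hR0]; linarith
            linarith
        have hta : l/(2*R) ≤ t := by
          rw [htval, div_le_iff₀ (by positivity : (0:ℝ) < 2*R)]
          have hlr : l/R*R = l := div_mul_cancel₀ l hR0.ne'
          have e1 : (l/R - 1)*(2*R) = 2*(l/R*R) - 2*R := by ring
          rw [hlr] at e1
          linarith
        have ht0 : 0 < t := lt_of_lt_of_le (by positivity) hta
        have hle1 : t^(-c) ≤ l^(-c) * (2*R)^c := by
          calc t^(-c) ≤ (l/(2*R))^(-c) := by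
                apply Real.rpow_le_rpow_of_nonpos (by positivity) hta
                rw [hcdef]; push_cast; linarith
            _ = l^(-c) / (2*R)^(-c) := Real.div_rpow hl.le (by positivity : (0:ℝ) ≤ 2*R) (-c)
            _ = l^(-c) * (2*R)^c := by
                rw [Real.rpow_neg (by positivity : (0:ℝ) ≤ 2*R)]
                field_simp
        have hle2 : l^(-c + 2*γ) ≤ (2*R)^(-c + 2*γ) := by
          apply Real.rpow_le_rpow_of_nonpos (by positivity) hl2.le
          linarith
        have haveA : t^(-c) * l^(2*γ) ≤ (2:ℝ)^(2*γ) * R^(2*γ) := by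
          calc t^(-c) * l^(2*γ) ≤ (l^(-c) * (2*R)^c) * l^(2*γ) :=
                mul_le_mul_of_nonneg_right hle1 (Real.rpow_nonneg hl.le _)
            _ = (2*R)^c * (l^(-c) * l^(2*γ)) := by ring
            _ = (2*R)^c * l^(-c + 2*γ) := by rw [← Real.rpow_add hl]
            _ ≤ (2*R)^c * (2*R)^(-c + 2*γ) :=
                mul_le_mul_of_nonneg_left hle2 (Real.rpow_nonneg (by positivity) _)
            _ = (2*R)^(c + (-c + 2*γ)) := (Real.rpow_add (by positivity) _ _).symm
            _ = (2*R)^(2*γ) := by rw [show c + (-c + 2*γ) = 2*γ by ring]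
            _ = (2:ℝ)^(2*γ) * R^(2*γ) := Real.mul_rpow (by norm_num) hR0.le
        have haveD : (1 + l^2)^γ ≤ (2:ℝ)^γ * l^(2*γ) := by
          have hl1 : 1 ≤ l^2 := one_le_pow₀ (by linarith)
          calc (1+l^2)^γ ≤ (2*l^2)^γ := Real.rpow_le_rpow (by positivity) (by linarith) hγ.le
            _ = (2:ℝ)^γ * (l^2)^γ := Real.mul_rpow (by norm_num) (by positivity)
            _ = (2:ℝ)^γ * l^(2*γ) := by
                rw [← Real.rpow_natCast l 2, ← Real.rpow_mul hl.le]
                norm_num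
        calc |η k R l|^2 * (1+l^2)^γ
            ≤ (D^2 * u^(-c)) * ((2:ℝ)^γ * l^(2*γ)) :=
              mul_le_mul hησ haveD (Real.rpow_nonneg (by positivity) _) (by positivity)
          _ = (D^2*(2:ℝ)^γ) * (((2:ℝ)^k)^(-c)) * (t^(-c) * l^(2*γ)) := by
              rw [humul]; ring
          _ ≤ (D^2*(2:ℝ)^γ) * (r^k) * ((2:ℝ)^(2*γ) * R^(2*γ)) := by
              apply mul_le_mul (mul_le_mul_of_nonneg_left h2kc (by positivity)) haveA
                (by positivity) (by positivity)
          _ = (D^2*(2:ℝ)^γ*(2:ℝ)^(2*γ)) * (R^(2*γ) * r^k) := by ring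
          _ ≤ A * (R^(2*γ) * (r^k + min u u⁻¹ ^ α)) := by
              apply mul_le_mul
              · rw [hAdef]
                have h1 : (0:ℝ) ≤ 2*C^2*(2:ℝ)^(2*ε)*(5:ℝ)^γ := by positivity
                have h2 : (0:ℝ) ≤ D^2*(5:ℝ)^γ := by positivity
                linarith
              · apply mul_le_mul_of_nonneg_left _ hRγ0
                exact le_add_of_nonneg_right (by positivity)
              · positivity
              · exact hA0.le
          _ = A * R^(2*γ) * (r^k + min u u⁻¹ ^ α) := by ring
  -- assemble the sum
  obtain ⟨hsummin, htsummin⟩ := aux_min_sum α hα t ht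
  have hgeom := summable_geometric_of_lt_one hr0.le hr1
  have hsum1 : Summable (fun k : ℕ => r^(k+1)) := (summable_nat_add_iff 1).mpr hgeom
  have hgs : Summable (fun k : ℕ => A * R^(2*γ) *
      (r^(k+1) + min ((2:ℝ)^(k+1) * t) (((2:ℝ)^(k+1) * t)⁻¹) ^ α)) :=
    (hsum1.add hsummin).mul_left _
  have hf_le : ∀ k : ℕ, |η (k+1) R l|^2 * (1+l^2)^γ ≤ A * R^(2*γ) *
      (r^(k+1) + min ((2:ℝ)^(k+1) * t) (((2:ℝ)^(k+1) * t)⁻¹) ^ α) :=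
    fun k => key (k+1) (by omega)
  have hfs : Summable (fun k : ℕ => |η (k+1) R l|^2 * (1+l^2)^γ) :=
    Summable.of_nonneg_of_le (fun k => by positivity) hf_le hgs
  have htsum1 : ∑' k : ℕ, r^(k+1) ≤ (1-r)⁻¹ := by
    calc ∑' k : ℕ, r^(k+1) ≤ ∑' k : ℕ, r^k :=
          Summable.tsum_le_tsum (fun k => pow_le_pow_of_le_one hr0.le hr1.le (Nat.le_succ k)) hsum1 hgeom
      _ = (1-r)⁻¹ := tsum_geometric_of_lt_one hr0.le hr1
  calc (∑' k : ℕ, |η (k+1) R l|^2 * (1+l^2)^γ)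
      ≤ ∑' k : ℕ, A * R^(2*γ) *
          (r^(k+1) + min ((2:ℝ)^(k+1) * t) (((2:ℝ)^(k+1) * t)⁻¹) ^ α) :=
        Summable.tsum_le_tsum hf_le hfs hgs
    _ = A * R^(2*γ) * ∑' k : ℕ,
          (r^(k+1) + min ((2:ℝ)^(k+1) * t) (((2:ℝ)^(k+1) * t)⁻¹) ^ α) := tsum_mul_left
    _ = A * R^(2*γ) * ((∑' k : ℕ, r^(k+1)) +
          ∑' k : ℕ, min ((2:ℝ)^(k+1) * t) (((2:ℝ)^(k+1) * t)⁻¹) ^ α) := by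
        rw [Summable.tsum_add hsum1 hsummin]
    _ ≤ A * R^(2*γ) * ((1-r)⁻¹ + 4/(1-r)) := by
        apply mul_le_mul_of_nonneg_left (add_le_add htsum1 htsummin) (by positivity)
    _ = A * 5 / (1-r) * R^(2*γ) := by
        rw [inv_eq_one_div]
        field_simp
        ring
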